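/- arXiv:2310.02845 — 4 statements merged into one kernel-verified Lean document; each statement's English description precedes it below -/
import Mathlib

section
/- Every k-tuple structure M^(k) satisfies all the equations in Γ^(k); in particular: U ≤ I; π_i⌣ · π_i ≤ I; I ≤ π_i · U · π_i⌣; ⊤ · U ≤ Q_i · π_i; I = E_{[1,k]}; ⊤ · U · ⊤ = ⊤; and a ≤ U · ⊤ · U for every a ∈ Σ, all interpreted as relations over D(M)^k. -/
namespace CoRPaper

/-- Composition of binary relations (as sets of pairs). -/
def comp {D : Type} (R S : Set (D × D)) : Set (D × D) :=
  {p | ∃ y, (p.1, y) ∈ R ∧ (y, p.2) ∈ S}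

/-- Converse of a binary relation. -/
def conv {D : Type} (R : Set (D × D)) : Set (D × D) :=
  {p | (p.2, p.1) ∈ R}

/-- The identity relation. -/
def idRel {D : Type} : Set (D × D) := {p | p.1 = p.2}

/-- Terms of the calculus of relations (CoR). -/
inductive CoR (σ : Type) : Type
  | var (a : σ)
  | id
  | compl (t : CoR σ)
  | inter (s t : CoR σ)
  | comp (s t : CoR σ)
  | conv (t : CoR σ)

/-- Semantics of CoR terms over a valuation of variables as binary relations. -/
def CoR.sem {σ D : Type} (val : σ → Set (D × D)) : CoR σ → Set (D × D)
  | .var a => val a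
  | .id => idRel
  | .compl t => (t.sem val)ᶜ
  | .inter s t => s.sem val ∩ t.sem val
  | .comp s t => CoRPaper.comp (s.sem val) (t.sem val)
  | .conv t => CoRPaper.conv (t.sem val)

/-- Size of a CoR term. -/
def CoR.size {σ : Type} : CoR σ → ℕ
  | .var _ => 1
  | .id => 1
  | .compl t => 1 + t.size
  | .inter s t => 1 + s.size + t.size
  | .comp s t => 1 + s.size + t.size
  | .conv t => 1 + t.size

/-- Quantifier-free formulas of CoR: Boolean combinations of equations. -/
inductive CoRFml (σ : Type) : Type
  | eq (s t : CoR σ)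
  | not (φ : CoRFml σ)
  | and (φ ψ : CoRFml σ)

/-- Satisfaction of a quantifier-free CoR formula in a structure. -/
def CoRFml.sat {σ D : Type} (val : σ → Set (D × D)) : CoRFml σ → Prop
  | .eq s t => s.sem val = t.sem val
  | .not φ => ¬ φ.sat val
  | .and φ ψ => φ.sat val ∧ ψ.sat val

/-- Size of a quantifier-free CoR formula. -/
def CoRFml.size {σ : Type} : CoRFml σ → ℕ
  | .eq s t => 1 + s.size + t.size
  | .not φ => 1 + φ.size
  | .and φ ψ => 1 + φ.size + ψ.size

/-- First-order formulas over binary predicate symbols `σ`, with equality,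
    with variables among `x₁, …, x_k` (encoded as `Fin k`). -/
inductive FO (σ : Type) (k : ℕ) : Type
  | rel (a : σ) (i j : Fin k)
  | eq (i j : Fin k)
  | not (φ : FO σ k)
  | and (φ ψ : FO σ k)
  | ex (i : Fin k) (φ : FO σ k)

/-- Satisfaction of a first-order formula under an assignment. -/
def FO.sat {σ : Type} {k : ℕ} {D : Type} (M : σ → Set (D × D)) (f : Fin k → D) :
    FO σ k → Prop
  | .rel a i j => (f i, f j) ∈ M a
  | .eq i j => f i = f j
  | .not φ => ¬ φ.sat M f
  | .and φ ψ => φ.sat M f ∧ ψ.sat M f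
  | .ex i φ => ∃ v, φ.sat M (Function.update f i v)

/-- Size of a first-order formula. -/
def FO.size {σ : Type} {k : ℕ} : FO σ k → ℕ
  | .rel _ _ _ => 3
  | .eq _ _ => 3
  | .not φ => 1 + φ.size
  | .and φ ψ => 1 + φ.size + ψ.size
  | .ex _ φ => 2 + φ.size

/-- A formula is equality-free. -/
def FO.noEq {σ : Type} {k : ℕ} : FO σ k → Prop
  | .rel _ _ _ => True
  | .eq _ _ => False
  | .not φ => φ.noEq
  | .and φ ψ => φ.noEq ∧ ψ.noEq
  | .ex _ φ => φ.noEq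

/-- The signature `Σ^(k)`: the base symbols together with `U`, `π_i`, `Q_i`,
    `E_{[1,i+1]}` (`EL i`) and `E_{[i+1,k]}` (`ER i`) for `i : Fin k`. -/
inductive SigK (σ : Type) (k : ℕ) : Type
  | base (a : σ)
  | U
  | pi (i : Fin k)
  | Q (i : Fin k)
  | EL (i : Fin k)
  | ER (i : Fin k)

/-- The `k`-tuple structure `M^(k)` of a structure `M` over `σ`:
    its universe is `Fin k → D` and the relations are as in the paper. -/
def tupleInterp {σ : Type} {k : ℕ} {D : Type} (M : σ → Set (D × D)) :
    SigK σ k → Set ((Fin k → D) × (Fin k → D))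
  | .base a => {p | ∃ v w, (v, w) ∈ M a ∧
      p.1 = Function.const (Fin k) v ∧ p.2 = Function.const (Fin k) w}
  | .U => {p | ∃ v, p.1 = Function.const (Fin k) v ∧ p.2 = Function.const (Fin k) v}
  | .pi i => {p | p.2 = Function.const (Fin k) (p.1 i)}
  | .Q i => {p | ∀ j, j ≠ i → p.1 j = p.2 j}
  | .EL i => {p | ∀ j, j ≤ i → p.1 j = p.2 j}
  | .ER i => {p | ∀ j, i ≤ j → p.1 j = p.2 j}

/-- `E_{[1,n]}` for `0 ≤ n ≤ k`, where `E_{[1,0]}` denotes `⊤`. -/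
def ELx {σ : Type} {k : ℕ} {D : Type} (I : SigK σ k → Set (D × D)) (n : Fin (k + 1)) :
    Set (D × D) :=
  if h : (n : ℕ) = 0 then Set.univ
  else I (.EL ⟨(n : ℕ) - 1, by have := n.isLt; omega⟩)

/-- `E_{[n+1,k]}` for `0 ≤ n ≤ k`, where `E_{[k+1,k]}` denotes `⊤`. -/
def ERx {σ : Type} {k : ℕ} {D : Type} (I : SigK σ k → Set (D × D)) (n : Fin (k + 1)) :
    Set (D × D) :=
  if h : (n : ℕ) = k then Set.univ
  else I (.ER ⟨(n : ℕ), by have := n.isLt; omega⟩)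

/-- A structure over `Σ^(k)` satisfies all the equations of `Γ^(k)`
    (equations (1)–(11) of the paper). -/
def satGamma {σ : Type} {k : ℕ} {D : Type} (I : SigK σ k → Set (D × D)) : Prop :=
  (I .U = ⋂ j, I (.pi j)) ∧
  (∀ i : Fin k, I (.EL i) = ELx I i.castSucc ∩ comp (I (.pi i)) (conv (I (.pi i)))) ∧
  (∀ i : Fin k, I (.ER i) = ERx I i.succ ∩ comp (I (.pi i)) (conv (I (.pi i)))) ∧
  (∀ i : Fin k, I (.Q i) = ELx I i.castSucc ∩ ERx I i.succ) ∧
  (I .U ⊆ idRel) ∧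
  (∀ i : Fin k, comp (conv (I (.pi i))) (I (.pi i)) ⊆ idRel) ∧
  (∀ i : Fin k, idRel ⊆ comp (I (.pi i)) (comp (I .U) (conv (I (.pi i))))) ∧
  (∀ i : Fin k, comp Set.univ (I .U) ⊆ comp (I (.Q i)) (I (.pi i))) ∧
  (idRel = ELx I (Fin.last k)) ∧
  (comp Set.univ (comp (I .U) Set.univ) = Set.univ) ∧
  (∀ a : σ, I (.base a) ⊆ comp (I .U) (comp Set.univ (I .U)))

/-- A structure over `Σ^(k)` satisfies all the FO3 sentences of `Γ_{FO3}^(k)`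
    (sentences (1')–(11') of the paper). -/
def satGammaFO3 {σ : Type} {k : ℕ} {D : Type} (I : SigK σ k → Set (D × D)) : Prop :=
  (∀ x y : D, (x, y) ∈ I .U ↔ ∀ j : Fin k, (x, y) ∈ I (.pi j)) ∧
  (∀ i : Fin k, ∀ x y : D, (x, y) ∈ I (.EL i) ↔
    ((x, y) ∈ ELx I i.castSucc ∧ ∃ z, (x, z) ∈ I (.pi i) ∧ (y, z) ∈ I (.pi i))) ∧
  (∀ i : Fin k, ∀ x y : D, (x, y) ∈ I (.ER i) ↔
    ((x, y) ∈ ERx I i.succ ∧ ∃ z, (x, z) ∈ I (.pi i) ∧ (y, z) ∈ I (.pi i))) ∧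
  (∀ i : Fin k, ∀ x y : D, (x, y) ∈ I (.Q i) ↔
    ((x, y) ∈ ELx I i.castSucc ∧ (x, y) ∈ ERx I i.succ)) ∧
  (∀ x y : D, (x, y) ∈ I .U → x = y) ∧
  (∀ i : Fin k, ∀ x y z : D, (x, y) ∈ I (.pi i) → (x, z) ∈ I (.pi i) → y = z) ∧
  (∀ i : Fin k, ∀ x : D, ∃ y, (x, y) ∈ I (.pi i) ∧ (y, y) ∈ I .U) ∧
  (∀ i : Fin k, ∀ x y : D, (y, y) ∈ I .U → ∃ z, (x, z) ∈ I (.Q i) ∧ (z, y) ∈ I (.pi i)) ∧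
  (∀ x y : D, x = y ↔ (x, y) ∈ ELx I (Fin.last k)) ∧
  (∃ x : D, (x, x) ∈ I .U) ∧
  (∀ a : σ, ∀ x y : D, (x, y) ∈ I (.base a) → ((x, x) ∈ I .U ∧ (y, y) ∈ I .U))

/-- The translation `T^(k)` from FO formulas into CoR terms over `Σ^(k)`. -/
def Ttrans {σ : Type} {k : ℕ} : FO σ k → CoR (SigK σ k)
  | .rel a i j =>
      .inter (.comp (.var (.pi i)) (.comp (.var (.base a)) (.conv (.var (.pi j))))) .id
  | .eq i j => .inter (.comp (.var (.pi i)) (.conv (.var (.pi j)))) .id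
  | .not φ => .compl (Ttrans φ)
  | .and φ ψ => .inter (Ttrans φ) (Ttrans ψ)
  | .ex i φ => .inter (.comp (.var (.Q i)) (.comp (Ttrans φ) (.conv (.var (.Q i))))) .id

/-- `z' = min({x₁,x₂,x₃} \ {z})` under the ordering `x₁ < x₂ < x₃`. -/
def fstOther : Fin 3 → Fin 3
  | 0 => 1
  | 1 => 0
  | 2 => 0

/-- `z'' = min({x₁,x₂,x₃} \ {z, z'})`. -/
def sndOther : Fin 3 → Fin 3
  | 0 => 2
  | 1 => 2
  | 2 => 1

/-- The direct three-variable translation `T_z^(k)` of FO formulas. -/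
def Tz {σ : Type} {k : ℕ} : Fin 3 → FO σ k → FO (SigK σ k) 3
  | z, .rel a i j =>
      .ex (fstOther z) (.ex (sndOther z)
        (.and (.rel (.pi i) z (fstOther z))
          (.and (.rel (.base a) (fstOther z) (sndOther z))
            (.rel (.pi j) z (sndOther z)))))
  | z, .eq i j =>
      .ex (fstOther z) (.and (.rel (.pi i) z (fstOther z)) (.rel (.pi j) z (fstOther z)))
  | z, .not φ => .not (Tz z φ)
  | z, .and φ ψ => .and (Tz z φ) (Tz z ψ)
  | z, .ex i φ => .ex (fstOther z) (.and (.rel (.Q i) z (fstOther z)) (Tz (fstOther z) φ))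

/-- Satisfaction of the Tseitin equation set `Γ_t`: the valuation interprets
    both the original variables (`Sum.inl`) and the fresh variables `a_s`
    (`Sum.inr s`) and satisfies all defining equations for subterms of `t`. -/
def tseitinSat {σ D : Type} (val : σ ⊕ CoR σ → Set (D × D)) : CoR σ → Prop
  | .var b => val (Sum.inr (.var b)) = val (Sum.inl b)
  | .id => val (Sum.inr .id) = idRel
  | .compl s => tseitinSat val s ∧ val (Sum.inr (.compl s)) = (val (Sum.inr s))ᶜ
  | .inter s u => tseitinSat val s ∧ tseitinSat val u ∧
      val (Sum.inr (.inter s u)) = val (Sum.inr s) ∩ val (Sum.inr u)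
  | .comp s u => tseitinSat val s ∧ tseitinSat val u ∧
      val (Sum.inr (.comp s u)) = comp (val (Sum.inr s)) (val (Sum.inr u))
  | .conv s => tseitinSat val s ∧ val (Sum.inr (.conv s)) = conv (val (Sum.inr s))

/-- The subterm relation on CoR terms. -/
inductive Subterm {σ : Type} : CoR σ → CoR σ → Prop
  | refl (t : CoR σ) : Subterm t t
  | compl {s t : CoR σ} : Subterm s t → Subterm s (.compl t)
  | conv {s t : CoR σ} : Subterm s t → Subterm s (.conv t)
  | interL {s t u : CoR σ} : Subterm s t → Subterm s (.inter t u)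
  | interR {s t u : CoR σ} : Subterm s u → Subterm s (.inter t u)
  | compL {s t u : CoR σ} : Subterm s t → Subterm s (.comp t u)
  | compR {s t u : CoR σ} : Subterm s u → Subterm s (.comp t u)


/-- every `k`-tuple structure satisfies all equations in `Γ^(k)`
(in particular `U ≤ I`, `π_i⌣·π_i ≤ I`, `I ≤ π_i·U·π_i⌣`, `⊤·U ≤ Q_i·π_i`,
`I = E_{[1,k]}`, `⊤·U·⊤ = ⊤`, and `a ≤ U·⊤·U`). -/
theorem kTuple_satisfies_Gamma {σ D : Type} [Nonempty D] {k : ℕ} (hk : 1 ≤ k)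
    (M : σ → Set (D × D)) :
    satGamma (tupleInterp (k := k) M) := by
  have z : Fin k := ⟨0, hk⟩
  have hconst : ∀ {v w : D},
      Function.const (Fin k) v = Function.const (Fin k) w → v = w :=
    fun h => congrFun h z
  have hEL : ∀ (n : Fin (k + 1)) (f g : Fin k → D),
      (f, g) ∈ ELx (tupleInterp (k := k) M) n ↔
        ∀ j : Fin k, (j : ℕ) < (n : ℕ) → f j = g j := by
    intro n f g
    unfold ELx
    by_cases h0 : (n : ℕ) = 0
    · rw [dif_pos h0]
      constructor
      · intro _ j hj; omega
      · intro _; trivial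
    · rw [dif_neg h0]
      constructor
      · intro h j hj
        have h' : ∀ j : Fin k, j ≤ (⟨(n : ℕ) - 1, by have := n.isLt; omega⟩ : Fin k) →
            f j = g j := h
        exact h' j (show (j : ℕ) ≤ (n : ℕ) - 1 by omega)
      · intro h
        show ∀ j : Fin k, j ≤ (⟨(n : ℕ) - 1, by have := n.isLt; omega⟩ : Fin k) →
            f j = g j
        intro j hj
        have hj' : (j : ℕ) ≤ (n : ℕ) - 1 := hj
        exact h j (by omega)
  have hER : ∀ (n : Fin (k + 1)) (f g : Fin k → D),
      (f, g) ∈ ERx (tupleInterp (k := k) M) n ↔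
        ∀ j : Fin k, (n : ℕ) ≤ (j : ℕ) → f j = g j := by
    intro n f g
    unfold ERx
    by_cases h0 : (n : ℕ) = k
    · rw [dif_pos h0]
      constructor
      · intro _ j hj; have := j.isLt; omega
      · intro _; trivial
    · rw [dif_neg h0]
      constructor
      · intro h j hj
        have h' : ∀ j : Fin k, (⟨(n : ℕ), by have := n.isLt; omega⟩ : Fin k) ≤ j →
            f j = g j := h
        exact h' j (show (n : ℕ) ≤ (j : ℕ) from hj)
      · intro h
        show ∀ j : Fin k, (⟨(n : ℕ), by have := n.isLt; omega⟩ : Fin k) ≤ j →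
            f j = g j
        intro j hj
        exact h j hj
  have hcomp : ∀ (i : Fin k) (f g : Fin k → D),
      (f, g) ∈ comp (tupleInterp (k := k) M (.pi i))
        (conv (tupleInterp (k := k) M (.pi i))) ↔ f i = g i := by
    intro i f g
    constructor
    · rintro ⟨y, hy1, hy2⟩
      have hy1' : y = Function.const (Fin k) (f i) := hy1
      have hy2' : y = Function.const (Fin k) (g i) := hy2
      exact hconst (hy1'.symm.trans hy2')
    · intro h
      exact ⟨Function.const (Fin k) (f i), rfl,
        show Function.const (Fin k) (f i) = Function.const (Fin k) (g i) by rw [h]⟩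
  refine ⟨?_, ?_, ?_, ?_, ?_, ?_, ?_, ?_, ?_, ?_, ?_⟩
  · -- U = ⋂ pi j
    ext ⟨f, g⟩
    simp only [Set.mem_iInter]
    constructor
    · rintro ⟨v, hf, hg⟩ j
      show g = Function.const (Fin k) (f j)
      have hf' : f = Function.const (Fin k) v := hf
      have hg' : g = Function.const (Fin k) v := hg
      rw [hf', hg']; rfl
    · intro h
      have hz : g = Function.const (Fin k) (f z) := h z
      refine ⟨f z, ?_, hz⟩
      show f = Function.const (Fin k) (f z)
      funext j
      have hj : g = Function.const (Fin k) (f j) := h j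
      exact congrFun (hj.symm.trans hz) z
  · -- EL
    intro i
    ext ⟨f, g⟩
    rw [Set.mem_inter_iff, hEL, hcomp]
    constructor
    · intro h
      have h' : ∀ j : Fin k, j ≤ i → f j = g j := h
      refine ⟨fun j hj => h' j ?_, h' i (le_refl i)⟩
      have hj' : (j : ℕ) < (i : ℕ) := hj
      show (j : ℕ) ≤ (i : ℕ); omega
    · rintro ⟨h1, h2⟩
      show ∀ j : Fin k, j ≤ i → f j = g j
      intro j hj
      have hj' : (j : ℕ) ≤ (i : ℕ) := hj
      rcases Nat.lt_or_ge (j : ℕ) (i : ℕ) with h | h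
      · exact h1 j (show (j : ℕ) < ((i.castSucc : Fin (k+1)) : ℕ) from h)
      · have : j = i := Fin.ext (by omega)
        rw [this]; exact h2
  · -- ER
    intro i
    ext ⟨f, g⟩
    rw [Set.mem_inter_iff, hER, hcomp]
    constructor
    · intro h
      have h' : ∀ j : Fin k, i ≤ j → f j = g j := h
      refine ⟨fun j hj => h' j ?_, h' i (le_refl i)⟩
      have hj' : (i : ℕ) + 1 ≤ (j : ℕ) := hj
      show (i : ℕ) ≤ (j : ℕ); omega
    · rintro ⟨h1, h2⟩
      show ∀ j : Fin k, i ≤ j → f j = g j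
      intro j hj
      have hj' : (i : ℕ) ≤ (j : ℕ) := hj
      rcases Nat.lt_or_ge (i : ℕ) (j : ℕ) with h | h
      · exact h1 j (show ((i.succ : Fin (k+1)) : ℕ) ≤ (j : ℕ) from h)
      · have : j = i := Fin.ext (by omega)
        rw [this]; exact h2
  · -- Q
    intro i
    ext ⟨f, g⟩
    rw [Set.mem_inter_iff, hEL, hER]
    constructor
    · intro h
      have h' : ∀ j : Fin k, j ≠ i → f j = g j := h
      constructor
      · intro j hj
        have hj' : (j : ℕ) < (i : ℕ) := hj
        exact h' j (fun he => by have : (j : ℕ) = (i : ℕ) := congrArg Fin.val he; omega)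
      · intro j hj
        have hj' : (i : ℕ) + 1 ≤ (j : ℕ) := hj
        exact h' j (fun he => by have : (j : ℕ) = (i : ℕ) := congrArg Fin.val he; omega)
    · rintro ⟨h1, h2⟩
      show ∀ j : Fin k, j ≠ i → f j = g j
      intro j hj
      have hne : (j : ℕ) ≠ (i : ℕ) := fun he => hj (Fin.ext he)
      rcases Nat.lt_or_ge (j : ℕ) (i : ℕ) with h | h
      · exact h1 j (show (j : ℕ) < ((i.castSucc : Fin (k+1)) : ℕ) from h)
      · exact h2 j (show (i : ℕ) + 1 ≤ (j : ℕ) by omega)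
  · -- U ⊆ idRel
    rintro ⟨f, g⟩ ⟨v, hf, hg⟩
    have hf' : f = Function.const (Fin k) v := hf
    have hg' : g = Function.const (Fin k) v := hg
    show f = g
    rw [hf', hg']
  · -- conv pi · pi ⊆ idRel
    rintro i ⟨f, g⟩ ⟨y, hf, hg⟩
    have hf' : f = Function.const (Fin k) (y i) := hf
    have hg' : g = Function.const (Fin k) (y i) := hg
    show f = g
    rw [hf', hg']
  · -- idRel ⊆ pi · U · conv pi
    rintro i ⟨f, g⟩ hfg
    have h : f = g := hfg
    exact ⟨Function.const (Fin k) (f i), rfl,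
      Function.const (Fin k) (f i), ⟨f i, rfl, rfl⟩,
      show Function.const (Fin k) (f i) = Function.const (Fin k) (g i) by rw [h]⟩
  · -- comp univ U ⊆ comp Q pi
    rintro i ⟨f, g⟩ ⟨h, -, hg⟩
    obtain ⟨v, hh, hgv⟩ := hg
    have hgv' : g = Function.const (Fin k) v := hgv
    refine ⟨Function.update f i v, fun j hj => (Function.update_of_ne hj v f).symm, ?_⟩
    show g = Function.const (Fin k) (Function.update f i v i)
    rw [Function.update_self]; exact hgv'
  · -- idRel = ELx last
    ext ⟨f, g⟩
    rw [hEL]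
    constructor
    · intro h j _
      have h' : f = g := h
      rw [h']
    · intro h
      show f = g
      funext j
      exact h j j.isLt
  · -- comp univ (comp U univ) = univ
    apply Set.eq_univ_of_forall
    rintro ⟨f, g⟩
    obtain ⟨d⟩ := ‹Nonempty D›
    exact ⟨Function.const (Fin k) d, trivial, Function.const (Fin k) d,
      ⟨d, rfl, rfl⟩, trivial⟩
  · -- base a ⊆ U · univ · U
    rintro a ⟨f, g⟩ ⟨v, w, -, hf, hg⟩
    have hf' : f = Function.const (Fin k) v := hf
    have hg' : g = Function.const (Fin k) w := hg
    exact ⟨f, ⟨v, hf', hf'⟩, g, trivial, ⟨w, hg', hg'⟩⟩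

end CoRPaper
end

section
/- Let M be a structure over Σ^(k) satisfying all equations of Γ^(k). Then the map f: D(M) → U₀^k defined by f(v) = (π₁^M(v), …, π_k^M(v)) (where π_i^M is the function induced by the relation π_i^M, and U₀ = {v | (v,v) ∈ U^M}) is a bijection. -/
namespace CoRPaper

section Aux
variable {σ D : Type} {k : ℕ} (I : SigK σ k → Set (D × D))

lemma comp_conv_mem {R : Set (D × D)} {x y : D} :
    (x, y) ∈ comp R (conv R) ↔ ∃ z, (x, z) ∈ R ∧ (y, z) ∈ R := by
  constructor
  · rintro ⟨z, hz1, hz2⟩; exact ⟨z, hz1, hz2⟩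
  · rintro ⟨z, hz1, hz2⟩; exact ⟨z, hz1, hz2⟩

lemma elx_iff
    (hEL : ∀ i : Fin k, I (.EL i) = ELx I i.castSucc ∩
      comp (I (.pi i)) (conv (I (.pi i)))) :
    ∀ (m : ℕ) (hm : m ≤ k) (x y : D),
      (x, y) ∈ ELx I ⟨m, by omega⟩ ↔
        ∀ j : Fin k, (j : ℕ) < m → ∃ z, (x, z) ∈ I (.pi j) ∧ (y, z) ∈ I (.pi j) := by
  intro m
  induction m with
  | zero =>
    intro hm x y
    simp [ELx]
  | succ n ih =>
    intro hm x y
    have hk' : n < k := by omega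
    have h1 : ELx I ⟨n + 1, by omega⟩ = I (.EL ⟨n, hk'⟩) := by
      rw [ELx, dif_neg (show ¬ (n + 1 = 0) by omega)]
      rfl
    rw [h1, hEL ⟨n, hk'⟩]
    have h2 : (⟨n, hk'⟩ : Fin k).castSucc = (⟨n, by omega⟩ : Fin (k+1)) := by
      ext; simp
    rw [h2]
    constructor
    · rintro ⟨hel, hcc⟩ j hj
      rcases Nat.lt_or_ge (j : ℕ) n with hlt | hge
      · exact ((ih (by omega) x y).1 hel) j hlt
      · have : j = ⟨n, hk'⟩ := by
          apply Fin.ext; simp; omega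
        rw [this]
        exact comp_conv_mem.1 hcc
    · intro hall
      refine ⟨(ih (by omega) x y).2 (fun j hj => hall j (by omega)), ?_⟩
      exact comp_conv_mem.2 (hall ⟨n, hk'⟩ (by simp))

lemma erx_iff
    (hER : ∀ i : Fin k, I (.ER i) = ERx I i.succ ∩
      comp (I (.pi i)) (conv (I (.pi i)))) :
    ∀ (d m : ℕ) (hm : m + d = k) (x y : D),
      (x, y) ∈ ERx I ⟨m, by omega⟩ ↔
        ∀ j : Fin k, m ≤ (j : ℕ) → ∃ z, (x, z) ∈ I (.pi j) ∧ (y, z) ∈ I (.pi j) := by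
  intro d
  induction d with
  | zero =>
    intro m hm x y
    have h1 : ERx I ⟨m, by omega⟩ = Set.univ := by
      rw [ERx, dif_pos (show m = k by omega)]
    rw [h1]
    constructor
    · intro _ j hj; exact absurd j.isLt (by omega)
    · intro _; trivial
  | succ n ih =>
    intro m hm x y
    have hk' : m < k := by omega
    have h1 : ERx I ⟨m, by omega⟩ = I (.ER ⟨m, hk'⟩) := by
      rw [ERx, dif_neg (show ¬ (m = k) by omega)]
    rw [h1, hER ⟨m, hk'⟩]
    have h2 : (⟨m, hk'⟩ : Fin k).succ = (⟨m + 1, by omega⟩ : Fin (k+1)) := by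
      ext; simp
    rw [h2]
    constructor
    · rintro ⟨her, hcc⟩ j hj
      rcases Nat.lt_or_ge m (j : ℕ) with hlt | hge
      · exact ((ih (m+1) (by omega) x y).1 her) j (by omega)
      · have : j = ⟨m, hk'⟩ := by apply Fin.ext; simp; omega
        rw [this]
        exact comp_conv_mem.1 hcc
    · intro hall
      refine ⟨(ih (m+1) (by omega) x y).2 (fun j hj => hall j (by omega)), ?_⟩
      exact comp_conv_mem.2 (hall ⟨m, hk'⟩ (by simp))

end Aux

/-- if `M ⊨ Γ^(k)`, the map `f(v) = (π₁(v), …, π_k(v))` is a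
bijection from `D(M)` onto `U₀^k`. -/
theorem tupling_map_bijective {σ D : Type} [Nonempty D] {k : ℕ} (hk : 1 ≤ k)
    (I : SigK σ k → Set (D × D)) (h : satGamma I)
    (f : D → Fin k → D) (hf : ∀ v i, (v, f v i) ∈ I (.pi i)) :
    Set.BijOn f Set.univ {g : Fin k → D | ∀ i, (g i, g i) ∈ I .U} := by
  obtain ⟨h1, h2, h3, h4, h5, h6, h7, h8, h9, h10, h11⟩ := h
  -- functionality of pi
  have func : ∀ (i : Fin k) (x y z : D),
      (x, y) ∈ I (.pi i) → (x, z) ∈ I (.pi i) → y = z := by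
    intro i x y z hy hz
    have : (y, z) ∈ comp (conv (I (.pi i))) (I (.pi i)) := ⟨x, hy, hz⟩
    exact h6 i this
  -- each f v i is in U₀
  have hU0 : ∀ (v : D) (i : Fin k), (f v i, f v i) ∈ I .U := by
    intro v i
    obtain ⟨y, hy, z, hz, hz'⟩ := h7 i (show (v, v) ∈ idRel from rfl)
    have : y = z := h5 hz
    subst this
    have hfz : (v, y) ∈ I (.pi i) := hz'
    have : f v i = y := func i v _ _ (hf v i) hfz
    rw [this]; exact hz
  refine ⟨fun v _ => hU0 v, ?_, ?_⟩
  · -- injectivity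
    intro v _ w _ hvw
    have hel : (v, w) ∈ ELx I ⟨k, by omega⟩ := by
      rw [elx_iff I h2 k (le_refl k) v w]
      intro j _
      exact ⟨f v j, hf v j, by rw [hvw]; exact hf w j⟩
    have : ELx I (Fin.last k) = ELx I ⟨k, by omega⟩ := rfl
    rw [this] at h9
    have : (v, w) ∈ idRel := by rw [h9]; exact hel
    exact this
  · -- surjectivity
    intro g hg
    -- Q_i characterization
    have hQ : ∀ (i : Fin k) (x y : D), (x, y) ∈ I (.Q i) →
        ∀ j : Fin k, j ≠ i → ∃ z, (x, z) ∈ I (.pi j) ∧ (y, z) ∈ I (.pi j) := by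
      intro i x y hxy j hij
      rw [h4 i] at hxy
      obtain ⟨hel, her⟩ := hxy
      rcases Nat.lt_or_ge (j : ℕ) (i : ℕ) with hlt | hge
      · have : (x, y) ∈ ELx I ⟨(i : ℕ), by omega⟩ := hel
        exact (elx_iff I h2 i (le_of_lt i.isLt) x y).1 this j hlt
      · have hne : (i : ℕ) < (j : ℕ) := by
          rcases lt_or_eq_of_le hge with h' | h'
          · exact h'
          · exact absurd (Fin.ext h'.symm) hij
        have : (x, y) ∈ ERx I ⟨(i : ℕ) + 1, by omega⟩ := her
        exact (erx_iff I h3 (k - ((i : ℕ) + 1)) ((i : ℕ) + 1) (by omega) x y).1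
          this j (by omega)
    -- axiom 8 usable form
    have hstep : ∀ (i : Fin k) (x : D), ∃ z : D,
        (x, z) ∈ I (.Q i) ∧ (z, g i) ∈ I (.pi i) := by
      intro i x
      have : (x, g i) ∈ comp Set.univ (I .U) := ⟨g i, trivial, hg i⟩
      exact h8 i this
    -- build the preimage by induction
    have main : ∀ m : ℕ, m ≤ k → ∃ v : D,
        ∀ j : Fin k, (j : ℕ) < m → (v, g j) ∈ I (.pi j) := by
      intro m
      induction m with
      | zero => intro _; exact ⟨Classical.arbitrary D, fun j hj => absurd hj (by omega)⟩
      | succ n ih =>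
        intro hm
        obtain ⟨v, hv⟩ := ih (by omega)
        have hk' : n < k := by omega
        obtain ⟨z, hzQ, hzpi⟩ := hstep ⟨n, hk'⟩ v
        refine ⟨z, fun j hj => ?_⟩
        rcases Nat.lt_or_ge (j : ℕ) n with hlt | hge
        · have hjne : j ≠ ⟨n, hk'⟩ := by
            intro h'; rw [h'] at hlt; simp at hlt
          obtain ⟨w, hw1, hw2⟩ := hQ ⟨n, hk'⟩ v z hzQ j hjne
          have : w = g j := func j v w (g j) hw1 (hv j hlt)
          rw [← this]; exact hw2
        · have : j = ⟨n, hk'⟩ := by apply Fin.ext; simp; omega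
          rw [this]; exact hzpi
    obtain ⟨v, hv⟩ := main k (le_refl k)
    refine ⟨v, trivial, ?_⟩
    funext j
    exact func j v (f v j) (g j) (hf v j) (hv j j.isLt)


end CoRPaper
end

section
/- A structure M over the signature Σ^(k) satisfies all equations of Γ^(k) if and only if M is isomorphic to the k-tuple structure N^(k) of some structure N over Σ. -/
namespace CoRPaper

section Aux

lemma mem_comp' {D : Type} {R S : Set (D × D)} {x y : D} :
    (x, y) ∈ comp R S ↔ ∃ z, (x, z) ∈ R ∧ (z, y) ∈ S := Iff.rfl

lemma mem_conv' {D : Type} {R : Set (D × D)} {x y : D} :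
    (x, y) ∈ conv R ↔ (y, x) ∈ R := Iff.rfl

lemma mem_idRel' {D : Type} {x y : D} : (x, y) ∈ (idRel : Set (D × D)) ↔ x = y := Iff.rfl

variable {σ : Type} {k : ℕ}

lemma ELx_zero {D : Type} (I : SigK σ k → Set (D × D)) (h : 0 < k + 1) :
    ELx I ⟨0, h⟩ = Set.univ := by
  unfold ELx; rfl

lemma ELx_pos {D : Type} (I : SigK σ k → Set (D × D)) {n : ℕ} (h : n < k) (h' : n + 1 < k + 1) :
    ELx I ⟨n + 1, h'⟩ = I (.EL ⟨n, h⟩) := by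
  unfold ELx; rfl

lemma ERx_top {D : Type} (I : SigK σ k → Set (D × D)) (h : k < k + 1) :
    ERx I ⟨k, h⟩ = Set.univ := by
  unfold ERx; rw [dif_pos rfl]

lemma ERx_pos {D : Type} (I : SigK σ k → Set (D × D)) {n : ℕ} (h : n < k) (h' : n < k + 1) :
    ERx I ⟨n, h'⟩ = I (.ER ⟨n, h⟩) := by
  unfold ERx
  rw [dif_neg (by simp; omega)]

end Aux
section TupleSat

variable {σ : Type} {k : ℕ} {E : Type}

lemma ELx_tuple (N : σ → Set (E × E)) (n : Fin (k + 1)) :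
    ELx (tupleInterp N) n
      = {p : (Fin k → E) × (Fin k → E) | ∀ j : Fin k, (j : ℕ) < (n : ℕ) → p.1 j = p.2 j} := by
  unfold ELx
  split
  · next h => ext ⟨f, g⟩; simp only [Set.mem_univ, Set.mem_setOf_eq, true_iff]; intro j hj; omega
  · next h =>
    ext ⟨f, g⟩
    simp only [tupleInterp, Set.mem_setOf_eq, Fin.le_def]
    constructor
    · intro hh j hj; exact hh j (by omega)
    · intro hh j hj; exact hh j (by omega)

lemma ERx_tuple (N : σ → Set (E × E)) (n : Fin (k + 1)) :
    ERx (tupleInterp N) n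
      = {p : (Fin k → E) × (Fin k → E) | ∀ j : Fin k, (n : ℕ) ≤ (j : ℕ) → p.1 j = p.2 j} := by
  unfold ERx
  split
  · next h => ext ⟨f, g⟩; simp only [Set.mem_univ, Set.mem_setOf_eq, true_iff]
              intro j hj; exact absurd j.isLt (by omega)
  · next h =>
    ext ⟨f, g⟩
    simp only [tupleInterp, Set.mem_setOf_eq, Fin.le_def]

lemma satGamma_tupleInterp (hk : 1 ≤ k) [Nonempty E] (N : σ → Set (E × E)) :
    satGamma (tupleInterp (k := k) N) := by
  have i0 : Fin k := ⟨0, hk⟩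
  refine ⟨?_, fun i => ?_, fun i => ?_, fun i => ?_, ?_, fun i => ?_, fun i => ?_,
    fun i => ?_, ?_, ?_, fun a => ?_⟩
  · -- (1) U = ⋂ pi j
    ext ⟨f, g⟩
    simp only [tupleInterp, Set.mem_setOf_eq, Set.mem_iInter]
    constructor
    · rintro ⟨v, rfl, rfl⟩ j; rfl
    · intro h
      refine ⟨f ⟨0, hk⟩, ?_, h ⟨0, hk⟩⟩
      funext j
      have := congrFun ((h j).symm.trans (h ⟨0, hk⟩)) ⟨0, hk⟩
      simpa using this
  · -- (2) EL i
    ext ⟨f, g⟩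
    rw [ELx_tuple]
    simp only [tupleInterp, Set.mem_setOf_eq, Set.mem_inter_iff, mem_comp', mem_conv',
      Fin.coe_castSucc, Fin.le_def]
    constructor
    · intro h
      refine ⟨fun j hj => h j (by omega), Function.const (Fin k) (f i), rfl, ?_⟩
      have : f i = g i := h i le_rfl
      rw [this]
    · rintro ⟨hL, z, rfl, hz⟩ j hj
      have hfg : f i = g i := congrFun hz ⟨0, hk⟩
      rcases Nat.lt_or_ge (j : ℕ) (i : ℕ) with hj' | hj'
      · exact hL j hj'
      · have : j = i := Fin.ext (by omega)
        rw [this]; exact hfg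
  · -- (3) ER i
    ext ⟨f, g⟩
    rw [ERx_tuple]
    simp only [tupleInterp, Set.mem_setOf_eq, Set.mem_inter_iff, mem_comp', mem_conv',
      Fin.val_succ, Fin.le_def]
    constructor
    · intro h
      refine ⟨fun j hj => h j (by omega), Function.const (Fin k) (f i), rfl, ?_⟩
      have : f i = g i := h i le_rfl
      rw [this]
    · rintro ⟨hR, z, rfl, hz⟩ j hj
      have hfg : f i = g i := congrFun hz ⟨0, hk⟩
      rcases Nat.lt_or_ge (i : ℕ) (j : ℕ) with hj' | hj'
      · exact hR j (by omega)
      · have : j = i := Fin.ext (by omega)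
        rw [this]; exact hfg
  · -- (4) Q i
    ext ⟨f, g⟩
    rw [ELx_tuple, ERx_tuple]
    simp only [tupleInterp, Set.mem_setOf_eq, Set.mem_inter_iff, Fin.coe_castSucc, Fin.val_succ]
    constructor
    · intro h
      exact ⟨fun j hj => h j (fun hc => by rw [hc] at hj; omega),
             fun j hj => h j (fun hc => by rw [hc] at hj; omega)⟩
    · rintro ⟨hL, hR⟩ j hj
      rcases Nat.lt_or_ge (j : ℕ) (i : ℕ) with hj' | hj'
      · exact hL j hj'
      · have : (i : ℕ) < (j : ℕ) := lt_of_le_of_ne hj' (fun hc => hj (Fin.ext hc.symm))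
        exact hR j (by omega)
  · -- (5) U ⊆ id
    rintro ⟨f, g⟩ ⟨v, rfl, rfl⟩; rfl
  · -- (6) functional
    rintro ⟨f, g⟩ ⟨h, hh1, hh2⟩
    exact hh1.trans hh2.symm
  · -- (7) total
    rintro ⟨f, g⟩ hfg
    cases hfg
    exact ⟨Function.const (Fin k) (f i), rfl, Function.const (Fin k) (f i),
      ⟨f i, rfl, rfl⟩, rfl⟩
  · -- (8)
    rintro ⟨f, g⟩ ⟨w, -, v, hv1, hv2⟩
    refine ⟨Function.update f i v, ?_, ?_⟩
    · intro j hj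
      exact (Function.update_of_ne hj v f).symm
    · show g = Function.const (Fin k) (Function.update f i v i)
      rw [Function.update_self]; exact hv2
  · -- (9)
    ext ⟨f, g⟩
    rw [ELx_tuple]
    simp only [Set.mem_setOf_eq, Fin.val_last]
    constructor
    · intro h j _
      exact congrFun (show f = g from h) j
    · intro h; exact funext fun j => h j j.isLt
  · -- (10)
    apply Set.eq_univ_of_forall
    rintro ⟨f, g⟩
    obtain ⟨v⟩ := (inferInstance : Nonempty E)
    exact ⟨Function.const (Fin k) v, trivial,
      Function.const (Fin k) v, ⟨v, rfl, rfl⟩, trivial⟩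
  · -- (11)
    rintro ⟨f, g⟩ ⟨v, w, hvw, rfl, rfl⟩
    exact ⟨Function.const (Fin k) v, ⟨v, rfl, rfl⟩,
      Function.const (Fin k) w, trivial, ⟨w, rfl, rfl⟩⟩

end TupleSat
section Transfer

variable {D D' : Type} {e : D ≃ D'}

/-- Pointwise correspondence of relations along an equivalence. -/
def corr (e : D ≃ D') (R : Set (D × D)) (S : Set (D' × D')) : Prop :=
  ∀ x y : D, (x, y) ∈ R ↔ (e x, e y) ∈ S

lemma corr_comp {R R' : Set (D × D)} {S S' : Set (D' × D')}
    (h : corr e R S) (h' : corr e R' S') : corr e (comp R R') (comp S S') := by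
  intro x y
  constructor
  · rintro ⟨z, hz1, hz2⟩
    exact ⟨e z, (h x z).mp hz1, (h' z y).mp hz2⟩
  · rintro ⟨w, hw1, hw2⟩
    refine ⟨e.symm w, (h x _).mpr ?_, (h' _ y).mpr ?_⟩
    · rwa [Equiv.apply_symm_apply]
    · rwa [Equiv.apply_symm_apply]

lemma corr_conv {R : Set (D × D)} {S : Set (D' × D')} (h : corr e R S) :
    corr e (conv R) (conv S) := fun x y => h y x

lemma corr_inter {R R' : Set (D × D)} {S S' : Set (D' × D')}
    (h : corr e R S) (h' : corr e R' S') : corr e (R ∩ R') (S ∩ S') :=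
  fun x y => and_congr (h x y) (h' x y)

lemma corr_iInter {ι : Type*} {R : ι → Set (D × D)} {S : ι → Set (D' × D')}
    (h : ∀ i, corr e (R i) (S i)) : corr e (⋂ i, R i) (⋂ i, S i) := by
  intro x y
  simp only [Set.mem_iInter]
  exact forall_congr' fun i => h i x y

lemma corr_univ : corr e Set.univ Set.univ := fun _ _ => by simp

lemma corr_idRel : corr e idRel idRel := by
  intro x y
  simp only [idRel, Set.mem_setOf_eq]
  exact ⟨fun h => by rw [h], fun h => e.injective h⟩

lemma corr_eqSet {R R' : Set (D × D)} {S S' : Set (D' × D')}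
    (h : corr e R S) (h' : corr e R' S') (hS : S = S') : R = R' := by
  ext ⟨x, y⟩; rw [h x y, h' x y, hS]

lemma corr_subset {R R' : Set (D × D)} {S S' : Set (D' × D')}
    (h : corr e R S) (h' : corr e R' S') (hS : S ⊆ S') : R ⊆ R' := by
  rintro ⟨x, y⟩ hx
  exact (h' x y).mpr (hS ((h x y).mp hx))

variable {σ : Type} {k : ℕ}

lemma corr_ELx {I : SigK σ k → Set (D × D)} {J : SigK σ k → Set (D' × D')}
    (H : ∀ s, corr e (I s) (J s)) (n : Fin (k + 1)) : corr e (ELx I n) (ELx J n) := by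
  unfold ELx
  by_cases h0 : (n : ℕ) = 0
  · rw [dif_pos h0, dif_pos h0]; exact corr_univ
  · rw [dif_neg h0, dif_neg h0]; exact H _

lemma corr_ERx {I : SigK σ k → Set (D × D)} {J : SigK σ k → Set (D' × D')}
    (H : ∀ s, corr e (I s) (J s)) (n : Fin (k + 1)) : corr e (ERx I n) (ERx J n) := by
  unfold ERx
  by_cases h0 : (n : ℕ) = k
  · rw [dif_pos h0, dif_pos h0]; exact corr_univ
  · rw [dif_neg h0, dif_neg h0]; exact H _

lemma satGamma_transfer {I : SigK σ k → Set (D × D)} {J : SigK σ k → Set (D' × D')}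
    (e : D ≃ D') (H : ∀ s, corr e (I s) (J s)) (hJ : satGamma J) : satGamma I := by
  obtain ⟨g1, g2, g3, g4, g5, g6, g7, g8, g9, g10, g11⟩ := hJ
  refine ⟨?_, fun i => ?_, fun i => ?_, fun i => ?_, ?_, fun i => ?_, fun i => ?_,
    fun i => ?_, ?_, ?_, fun a => ?_⟩
  · exact corr_eqSet (H .U) (corr_iInter fun j => H (.pi j)) g1
  · exact corr_eqSet (H _) (corr_inter (corr_ELx H _) (corr_comp (H _) (corr_conv (H _)))) (g2 i)
  · exact corr_eqSet (H _) (corr_inter (corr_ERx H _) (corr_comp (H _) (corr_conv (H _)))) (g3 i)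
  · exact corr_eqSet (H _) (corr_inter (corr_ELx H _) (corr_ERx H _)) (g4 i)
  · exact corr_subset (H .U) corr_idRel g5
  · exact corr_subset (corr_comp (corr_conv (H _)) (H _)) corr_idRel (g6 i)
  · exact corr_subset corr_idRel (corr_comp (H _) (corr_comp (H .U) (corr_conv (H _)))) (g7 i)
  · exact corr_subset (corr_comp corr_univ (H .U)) (corr_comp (H _) (H _)) (g8 i)
  · exact corr_eqSet corr_idRel (corr_ELx H _) g9
  · exact corr_eqSet (corr_comp corr_univ (corr_comp (H .U) corr_univ)) corr_univ g10
  · exact corr_subset (H _) (corr_comp (H .U) (corr_comp corr_univ (H .U))) (g11 a)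

end Transfer
section Forward

variable {σ : Type} {k : ℕ} {D : Type}

lemma satGamma_forward (hk : 1 ≤ k) [Nonempty D]
    (I : SigK σ k → Set (D × D)) (hI : satGamma I) :
    ∃ (E : Type) (_ : Nonempty E) (N : σ → Set (E × E)) (e : D ≃ (Fin k → E)),
      ∀ (s : SigK σ k) (x y : D), (x, y) ∈ I s ↔ (e x, e y) ∈ tupleInterp N s := by
  obtain ⟨h1, h2, h3, h4, h5, h6, h7, h8, h9, h10, h11⟩ := hI
  -- totality of projections
  have htot : ∀ (i : Fin k) (x : D), ∃ y, (x, y) ∈ I (.pi i) ∧ (y, y) ∈ I .U := by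
    intro i x
    have hx : (x, x) ∈ comp (I (.pi i)) (comp (I .U) (conv (I (.pi i)))) :=
      h7 i (mem_idRel'.mpr rfl)
    obtain ⟨y, hy, z, hz, -⟩ := hx
    have hyz : y = z := h5 hz
    subst hyz
    exact ⟨y, hy, hz⟩
  choose π hπ1 hπ2 using htot
  have hfun : ∀ (i : Fin k) (x y z : D), (x, y) ∈ I (.pi i) → (x, z) ∈ I (.pi i) → y = z := by
    intro i x y z hy hz
    exact h6 i (show (y, z) ∈ comp (conv (I (.pi i))) (I (.pi i)) from
      ⟨x, mem_conv'.mpr hy, hz⟩)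
  have huniq : ∀ (i : Fin k) (x y : D), (x, y) ∈ I (.pi i) → y = π i x :=
    fun i x y h => hfun i x y (π i x) h (hπ1 i x)
  have hUiff : ∀ x y : D, (x, y) ∈ I .U ↔ ∀ j, (x, y) ∈ I (.pi j) := by
    intro x y; rw [h1]; exact Set.mem_iInter
  -- the universe
  set E := {v : D // (v, v) ∈ I .U} with hE
  have hNE : Nonempty E := by
    obtain ⟨x0⟩ := (inferInstance : Nonempty D)
    have : (x0, x0) ∈ comp Set.univ (comp (I .U) Set.univ) := by rw [h10]; trivial
    obtain ⟨y, -, z, hz, -⟩ := this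
    have hyz : y = z := h5 hz
    subst hyz
    exact ⟨⟨y, hz⟩⟩
  set eFun : D → Fin k → E := fun x i => ⟨π i x, hπ2 i x⟩ with heFun
  have hconstE : ∀ (x : D) (v : E),
      eFun x = Function.const (Fin k) v ↔ ((x, x) ∈ I .U ∧ x = v.1) := by
    intro x v
    constructor
    · intro h
      have hp : ∀ j, (x, v.1) ∈ I (.pi j) := by
        intro j
        have h1' : π j x = v.1 := congrArg Subtype.val (congrFun h j)
        rw [← h1']
        exact hπ1 j x
      have hU : (x, v.1) ∈ I .U := (hUiff _ _).mpr hp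
      have hxv : x = v.1 := h5 hU
      refine ⟨?_, hxv⟩
      rw [hxv] at hU ⊢
      exact hU
    · rintro ⟨hU, hxv⟩
      funext j
      apply Subtype.ext
      show π j x = v.1
      have hxj : (x, x) ∈ I (.pi j) := (hUiff _ _).mp hU j
      exact (huniq j x x hxj).symm.trans hxv
  -- semantics of ELx and ERx
  have hEL : ∀ (n : ℕ) (hn : n ≤ k) (x y : D),
      (x, y) ∈ ELx I ⟨n, Nat.lt_succ_of_le hn⟩ ↔
        ∀ j : Fin k, (j : ℕ) < n → π j x = π j y := by
    intro n
    induction n with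
    | zero =>
      intro hn x y
      rw [ELx_zero]
      simp only [Set.mem_univ, true_iff]
      intro j hj; omega
    | succ n ih =>
      intro hn x y
      have hnk : n < k := hn
      rw [ELx_pos I hnk, h2 ⟨n, hnk⟩]
      constructor
      · rintro ⟨hel, z, hz1, hz2⟩
        intro j hj
        rcases Nat.lt_succ_iff_lt_or_eq.mp hj with hj' | hj'
        · exact (ih (le_of_lt hnk) x y).mp hel j hj'
        · have hji : j = ⟨n, hnk⟩ := Fin.ext hj'
          rw [hji]
          rw [← huniq _ x z hz1, ← huniq _ y z hz2]
      · intro hj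
        refine ⟨(ih (le_of_lt hnk) x y).mpr (fun j h => hj j (by omega)), π ⟨n, hnk⟩ x,
          hπ1 _ x, ?_⟩
        show (y, π ⟨n, hnk⟩ x) ∈ I (.pi ⟨n, hnk⟩)
        rw [hj ⟨n, hnk⟩ (Nat.lt_succ_self n)]
        exact hπ1 _ y
  have hER : ∀ (m n : ℕ) (hmn : n + m = k) (x y : D),
      (x, y) ∈ ERx I ⟨n, by omega⟩ ↔
        ∀ j : Fin k, n ≤ (j : ℕ) → π j x = π j y := by
    intro m
    induction m with
    | zero =>
      intro n hmn x y
      have hnk : n = k := by omega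
      subst hnk
      rw [ERx_top]
      simp only [Set.mem_univ, true_iff]
      intro j hj
      exact absurd j.isLt (by omega)
    | succ m ih =>
      intro n hmn x y
      have hnk : n < k := by omega
      rw [ERx_pos I hnk, h3 ⟨n, hnk⟩]
      have hsucc : (x, y) ∈ ERx I ⟨n + 1, by omega⟩ ↔
          ∀ j : Fin k, n + 1 ≤ (j : ℕ) → π j x = π j y := ih (n + 1) (by omega) x y
      constructor
      · rintro ⟨her, z, hz1, hz2⟩
        intro j hj
        rcases Nat.lt_or_ge n (j : ℕ) with hj' | hj'
        · exact hsucc.mp her j hj'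
        · have hji : j = ⟨n, hnk⟩ := Fin.ext (show (j : ℕ) = n by omega)
          rw [hji]
          rw [← huniq _ x z hz1, ← huniq _ y z hz2]
      · intro hj
        refine ⟨hsucc.mpr (fun j h => hj j (by omega)), π ⟨n, hnk⟩ x, hπ1 _ x, ?_⟩
        show (y, π ⟨n, hnk⟩ x) ∈ I (.pi ⟨n, hnk⟩)
        rw [hj ⟨n, hnk⟩ (le_refl n)]
        exact hπ1 _ y
  have hELc : ∀ (i : Fin k) (x y : D), (x, y) ∈ ELx I i.castSucc ↔
      ∀ j : Fin k, (j : ℕ) < (i : ℕ) → π j x = π j y :=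
    fun i x y => hEL i.1 (le_of_lt i.2) x y
  have hERc : ∀ (i : Fin k) (x y : D), (x, y) ∈ ERx I i.succ ↔
      ∀ j : Fin k, (i : ℕ) + 1 ≤ (j : ℕ) → π j x = π j y :=
    fun i x y => hER (k - ((i : ℕ) + 1)) ((i : ℕ) + 1) (by omega) x y
  have hcompPi : ∀ (i : Fin k) (x y : D),
      (x, y) ∈ comp (I (.pi i)) (conv (I (.pi i))) ↔ π i x = π i y := by
    intro i x y
    constructor
    · rintro ⟨z, hz1, hz2⟩
      rw [← huniq _ x z hz1, ← huniq _ y z hz2]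
    · intro h
      refine ⟨π i x, hπ1 _ x, ?_⟩
      show (y, π i x) ∈ I (.pi i)
      rw [h]; exact hπ1 _ y
  -- bijectivity
  have hinj : Function.Injective eFun := by
    intro x y hxy
    have hall : ∀ j : Fin k, π j x = π j y :=
      fun j => congrArg Subtype.val (congrFun hxy j)
    have hmem : (x, y) ∈ ELx I (Fin.last k) :=
      (hEL k le_rfl x y).mpr (fun j _ => hall j)
    rw [← h9] at hmem
    exact hmem
  have hsurj : Function.Surjective eFun := by
    intro f
    have key : ∀ n, n ≤ k → ∃ x, ∀ j : Fin k, (j : ℕ) < n → π j x = (f j).1 := by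
      intro n
      induction n with
      | zero =>
        intro _
        obtain ⟨x⟩ := (inferInstance : Nonempty D)
        exact ⟨x, fun j h => absurd h (by omega)⟩
      | succ n ih =>
        intro hn
        obtain ⟨x, hx⟩ := ih (by omega)
        have hnk : n < k := hn
        set i : Fin k := ⟨n, hnk⟩ with hi
        have hy : ((f i).1, (f i).1) ∈ I .U := (f i).2
        have hxy : (x, (f i).1) ∈ comp Set.univ (I .U) := ⟨(f i).1, trivial, hy⟩
        obtain ⟨z, hzQ, hzp⟩ := h8 i hxy
        rw [h4 i] at hzQ
        obtain ⟨hzL, hzR⟩ := hzQ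
        refine ⟨z, ?_⟩
        intro j hj
        rcases Nat.lt_succ_iff_lt_or_eq.mp hj with hj' | hj'
        · have := (hELc i x z).mp hzL j hj'
          rw [← this]
          exact hx j hj'
        · have hji : j = i := Fin.ext hj'
          rw [hji]
          exact (huniq i z (f i).1 hzp).symm
    obtain ⟨x, hx⟩ := key k le_rfl
    exact ⟨x, funext fun j => Subtype.ext (hx j j.isLt)⟩
  refine ⟨E, hNE, fun a => {p : E × E | (p.1.1, p.2.1) ∈ I (.base a)},
    Equiv.ofBijective eFun ⟨hinj, hsurj⟩, ?_⟩
  intro s x y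
  have happ : ∀ z : D, Equiv.ofBijective eFun ⟨hinj, hsurj⟩ z = eFun z := fun _ => rfl
  rw [happ, happ]
  cases s with
  | base a =>
    simp only [tupleInterp, Set.mem_setOf_eq]
    constructor
    · intro h
      obtain ⟨z, hzU, w, -, hwU⟩ := h11 a h
      have hxz : x = z := h5 hzU
      have hwy : w = y := h5 hwU
      rw [← hxz] at hzU
      rw [hwy] at hwU
      exact ⟨⟨x, hzU⟩, ⟨y, hwU⟩, h, (hconstE x _).mpr ⟨hzU, rfl⟩,
        (hconstE y _).mpr ⟨hwU, rfl⟩⟩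
    · rintro ⟨v, w, hvw, hex, hey⟩
      obtain ⟨-, hxv⟩ := (hconstE x v).mp hex
      obtain ⟨-, hyw⟩ := (hconstE y w).mp hey
      rw [hxv, hyw]
      exact hvw
  | U =>
    simp only [tupleInterp, Set.mem_setOf_eq]
    constructor
    · intro h
      have hxy : x = y := h5 h
      subst hxy
      exact ⟨⟨x, h⟩, (hconstE x _).mpr ⟨h, rfl⟩, (hconstE x _).mpr ⟨h, rfl⟩⟩
    · rintro ⟨v, hex, hey⟩
      obtain ⟨-, hxv⟩ := (hconstE x v).mp hex
      obtain ⟨-, hyv⟩ := (hconstE y v).mp hey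
      rw [hxv, hyv]
      exact v.2
  | pi i =>
    simp only [tupleInterp, Set.mem_setOf_eq]
    constructor
    · intro h
      have hyp : y = π i x := huniq i x y h
      apply (hconstE y _).mpr
      refine ⟨?_, hyp⟩
      rw [hyp]
      exact hπ2 i x
    · intro h
      obtain ⟨-, hy⟩ := (hconstE y _).mp h
      rw [hy]
      exact hπ1 i x
  | Q i =>
    simp only [tupleInterp, Set.mem_setOf_eq]
    rw [h4 i]
    constructor
    · rintro ⟨hL, hR⟩ j hji
      have hval : (j : ℕ) ≠ (i : ℕ) := fun hc => hji (Fin.ext hc)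
      apply Subtype.ext
      show π j x = π j y
      rcases Nat.lt_or_ge (j : ℕ) (i : ℕ) with hj' | hj'
      · exact (hELc i x y).mp hL j hj'
      · exact (hERc i x y).mp hR j (by omega)
    · intro h
      refine ⟨(hELc i x y).mpr ?_, (hERc i x y).mpr ?_⟩
      · intro j hj
        exact congrArg Subtype.val (h j (fun hc => by rw [hc] at hj; omega))
      · intro j hj
        exact congrArg Subtype.val (h j (fun hc => by rw [hc] at hj; omega))
  | EL i =>
    simp only [tupleInterp, Set.mem_setOf_eq]
    rw [h2 i]
    constructor
    · rintro ⟨hL, hc⟩ j hji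
      apply Subtype.ext
      show π j x = π j y
      rcases lt_or_eq_of_le (Fin.le_def.mp hji) with hj' | hj'
      · exact (hELc i x y).mp hL j hj'
      · have : j = i := Fin.ext hj'
        rw [this]
        exact (hcompPi i x y).mp hc
    · intro h
      refine ⟨(hELc i x y).mpr ?_, (hcompPi i x y).mpr ?_⟩
      · intro j hj
        exact congrArg Subtype.val (h j (Fin.le_def.mpr (by omega)))
      · exact congrArg Subtype.val (h i le_rfl)
  | ER i =>
    simp only [tupleInterp, Set.mem_setOf_eq]
    rw [h3 i]
    constructor
    · rintro ⟨hR, hc⟩ j hji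
      apply Subtype.ext
      show π j x = π j y
      rcases lt_or_eq_of_le (Fin.le_def.mp hji) with hj' | hj'
      · exact (hERc i x y).mp hR j (by omega)
      · have : j = i := Fin.ext hj'.symm
        rw [this]
        exact (hcompPi i x y).mp hc
    · intro h
      refine ⟨(hERc i x y).mpr ?_, (hcompPi i x y).mpr ?_⟩
      · intro j hj
        exact congrArg Subtype.val (h j (Fin.le_def.mpr (by omega)))
      · exact congrArg Subtype.val (h i le_rfl)

end Forward

/-- Lemma: characterization: a structure over `Σ^(k)` satisfies
`Γ^(k)` iff it is isomorphic to the `k`-tuple structure of some structure over `σ`. -/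
theorem satGamma_iff_iso_kTuple {σ : Type} {k : ℕ} (hk : 1 ≤ k)
    (D : Type) [Nonempty D] (I : SigK σ k → Set (D × D)) :
    satGamma I ↔
      ∃ (E : Type) (_ : Nonempty E) (N : σ → Set (E × E)) (e : D ≃ (Fin k → E)),
        ∀ (s : SigK σ k) (x y : D),
          (x, y) ∈ I s ↔ (e x, e y) ∈ tupleInterp N s := by
  constructor
  · intro hI
    exact satGamma_forward hk I hI
  · rintro ⟨E, hNE, N, e, H⟩
    haveI := hNE
    exact satGamma_transfer e (fun s => H s) (satGamma_tupleInterp hk N)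

end CoRPaper
end

section
/- Let k ≥ 3 and x₁,…,x_k pairwise distinct variables. For every FO formula φ with variables among {x₁,…,x_k}, every z ∈ {x₁,x₂,x₃}, every structure M, and all u₁,…,u_k ∈ D(M): the assignment sending z to the tuple (u₁,…,u_k) satisfies the three-variable formula T_z^(k)(φ) in the k-tuple structure M^(k) if and only if the assignment {x₁ ↦ u₁, …, x_k ↦ u_k} satisfies φ in M. -/
namespace CoRPaper

private lemma const_inj_aux {k : ℕ} (hk : 3 ≤ k) {D : Type} {v w : D}
    (h : Function.const (Fin k) v = Function.const (Fin k) w) : v = w :=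
  congrFun h ⟨0, by omega⟩

private lemma Tz_sat_iff {σ : Type} {k : ℕ} (hk : 3 ≤ k) {D : Type}
    (M : σ → Set (D × D)) (φ : FO σ k) :
    ∀ (z : Fin 3) (g : Fin 3 → (Fin k → D)),
      FO.sat (tupleInterp M) g (Tz z φ) ↔ FO.sat M (g z) φ := by
  induction φ with
  | rel a i j =>
    intro z g
    have h1 : z ≠ fstOther z := by fin_cases z <;> decide
    have h2 : z ≠ sndOther z := by fin_cases z <;> decide
    have h3 : fstOther z ≠ sndOther z := by fin_cases z <;> decide
    simp only [Tz, FO.sat, tupleInterp, Set.mem_setOf_eq, Function.update_self,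
      Function.update_of_ne h1, Function.update_of_ne h2, Function.update_of_ne h3]
    constructor
    · rintro ⟨v', v'', hpi, ⟨v, w, hm, hv, hw⟩, hpj⟩
      have hv' : g z i = v := const_inj_aux hk (hpi ▸ hv)
      have hw' : g z j = w := const_inj_aux hk (hpj ▸ hw)
      rw [hv', hw']; exact hm
    · intro h
      exact ⟨Function.const (Fin k) (g z i), Function.const (Fin k) (g z j), rfl,
        ⟨g z i, g z j, h, rfl, rfl⟩, rfl⟩
  | eq i j =>
    intro z g
    have h1 : z ≠ fstOther z := by fin_cases z <;> decide
    simp only [Tz, FO.sat, tupleInterp, Set.mem_setOf_eq, Function.update_self,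
      Function.update_of_ne h1]
    constructor
    · rintro ⟨v', hi, hj⟩
      exact const_inj_aux hk (hi.symm.trans hj)
    · intro h
      exact ⟨Function.const (Fin k) (g z i), rfl, by rw [h]⟩
  | not φ ih =>
    intro z g
    simp only [Tz, FO.sat, ih]
  | and φ ψ ihφ ihψ =>
    intro z g
    simp only [Tz, FO.sat, ihφ, ihψ]
  | ex i φ ih =>
    intro z g
    have h1 : z ≠ fstOther z := by fin_cases z <;> decide
    simp only [Tz, FO.sat, tupleInterp, Set.mem_setOf_eq, Function.update_self,
      Function.update_of_ne h1, ih]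
    constructor
    · rintro ⟨v', hq, hs⟩
      refine ⟨v' i, ?_⟩
      have hup : Function.update (g z) i (v' i) = v' := by
        funext j
        by_cases hj : j = i
        · subst hj; simp
        · rw [Function.update_of_ne hj]; exact hq j hj
      rw [hup]; exact hs
    · rintro ⟨v, hs⟩
      exact ⟨Function.update (g z) i v,
        fun j hj => (Function.update_of_ne hj _ _).symm, hs⟩

/-- the assignment sending `z` to `(u₁,…,u_k)` satisfies
`T_z^(k)(φ)` in `M^(k)` iff `{x₁ ↦ u₁, …, x_k ↦ u_k}` satisfies `φ` in `M`. -/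
theorem Tz_semantics {σ : Type} {k : ℕ} (hk : 3 ≤ k) {D : Type} [Nonempty D]
    (M : σ → Set (D × D)) (φ : FO σ k) (z : Fin 3) (u : Fin k → D) :
    (∃ g : Fin 3 → (Fin k → D), g z = u ∧ FO.sat (tupleInterp M) g (Tz z φ)) ↔
      FO.sat M u φ := by
  constructor
  · rintro ⟨g, hg, hs⟩
    rw [← hg]
    exact (Tz_sat_iff hk M φ z g).mp hs
  · intro h
    exact ⟨fun _ => u, rfl, (Tz_sat_iff hk M φ z _).mpr h⟩

end CoRPaper
end
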